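/- arXiv:1308.1575 — 4 statements merged into one kernel-verified Lean document; each statement's English description precedes it below -/
import Mathlib

section
/- Let P be the lattice of partitions of a finite set with n elements, ordered so that x ≤ y if and only if y refines x. If a partition x has exactly r+1 blocks (i.e., rank r), then the Möbius function satisfies μ(0̂, x) = (-1)^r · r!, where 0̂ is the one-block partition. -/
/-!
Write `g k = (-1)^(k-1) (k-1)!`. Since `μ` is determined by its recursion over the finite poset
of partitions, it suffices that `∑_{z ≥ x} g #z = 0` whenever `x` has at least two blocks
(coarsenings `z` of `x` in Mathlib's refinement order). Fix a block `a` of `x`. Deleting the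
points of `a` sends a coarsening `z` to a coarsening `Q` of the partition that `x` induces on the
complement of `a`, and `z` is recovered from `Q` together with the block `c` of `Q` that `a` was
merged into, or `c = ∅` when `a` is a block of `z`. Over a fixed `Q` with `k` blocks the
contributions are `g (k + 1) + k g k = 0`.
-/

open Finset

namespace Finpartition

section GeneralizedBooleanAlgebra

variable {α : Type*} [GeneralizedBooleanAlgebra α] [DecidableEq α] {s a c : α}

lemma avoid_parts_of_mem_insert_bot {P : Finpartition s} (hc : c ∈ insert ⊥ P.parts) :
    (P.avoid c).parts = P.parts.erase c := by
  have hdisj : ∀ d ∈ P.parts, d ≠ c → Disjoint d c := by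
    rcases mem_insert.1 hc with rfl | hc
    · exact fun _ _ _ ↦ disjoint_bot_right
    · exact fun d hd hne ↦ P.disjoint hd hc hne
  ext d
  rw [mem_avoid, mem_erase]
  constructor
  · rintro ⟨d, hd, hdc, rfl⟩
    have hne : d ≠ c := by rintro rfl; exact hdc le_rfl
    rw [(hdisj d hd hne).sdiff_eq_left]
    exact ⟨hne, hd⟩
  · rintro ⟨hne, hd⟩
    exact ⟨d, hd, fun hle ↦ P.ne_bot hd ((hdisj d hd hne).eq_bot_of_le hle),
      (hdisj d hd hne).sdiff_eq_left⟩

lemma avoid_avoid_parts (P : Finpartition s) (a c : α) :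
    ((P.avoid a).avoid c).parts = (P.avoid (a ⊔ c)).parts := by
  ext e
  simp only [mem_avoid, ← sdiff_le_iff]
  constructor
  · rintro ⟨_, ⟨d, hd, -, rfl⟩, hdc, rfl⟩
    exact ⟨d, hd, hdc, sdiff_sdiff_left.symm⟩
  · rintro ⟨d, hd, hdc, rfl⟩
    exact ⟨d \ a, ⟨d, hd, fun hda ↦ hdc (by simp [sdiff_eq_bot_iff.2 hda]), rfl⟩, hdc,
      sdiff_sdiff_left⟩

lemma avoid_mono {P Q : Finpartition s} (h : P ≤ Q) (a : α) : P.avoid a ≤ Q.avoid a := by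
  rintro _ hd'
  obtain ⟨d, hd, hda, rfl⟩ := (P.mem_avoid).1 hd'
  obtain ⟨e, he, hde⟩ := h hd
  exact ⟨e \ a, (Q.mem_avoid).2 ⟨e, he, fun hea ↦ hda (hde.trans hea), rfl⟩,
    sdiff_le_sdiff_right hde⟩

lemma le_of_mem_insert_bot {P : Finpartition s} (hc : c ∈ insert ⊥ P.parts) : c ≤ s :=
  (mem_insert.1 hc).elim (fun h ↦ h ▸ bot_le) P.le

lemma disjoint_of_mem_insert_bot {Q : Finpartition (s \ a)} (hc : c ∈ insert ⊥ Q.parts) :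
    Disjoint c a :=
  disjoint_sdiff_self_left.mono_left (le_of_mem_insert_bot hc)

lemma sdiff_mem_insert_bot_avoid {z : Finpartition s} {B : α} (hB : B ∈ z.parts) :
    B \ a ∈ insert ⊥ (z.avoid a).parts := by
  by_cases hBa : B ≤ a
  · exact mem_insert.2 (Or.inl (sdiff_eq_bot_iff.2 hBa))
  · exact mem_insert_of_mem ((z.mem_avoid).2 ⟨B, hB, hBa, rfl⟩)

/-- Merges `a` into the part `c` of `Q`; for `c = ⊥` this adds `a` as a new part. -/
def reinsert (Q : Finpartition (s \ a)) (ha : a ≠ ⊥) (has : a ≤ s) (hc : c ∈ insert ⊥ Q.parts) :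
    Finpartition s :=
  (Q.avoid c).extend (b := a ⊔ c) (by simp [ha])
    (disjoint_sup_right.2 ⟨disjoint_sdiff_self_left.mono_left sdiff_le, disjoint_sdiff_self_left⟩)
    (by rw [sup_comm a, ← sup_assoc, sdiff_sup_cancel (le_of_mem_insert_bot hc),
      sdiff_sup_cancel has])

variable {Q : Finpartition (s \ a)} (ha : a ≠ ⊥) (has : a ≤ s)

lemma reinsert_parts (hc : c ∈ insert ⊥ Q.parts) :
    (reinsert Q ha has hc).parts = insert (a ⊔ c) (Q.parts.erase c) := by
  rw [reinsert, extend_parts, avoid_parts_of_mem_insert_bot hc]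

lemma card_reinsert_parts (hc : c ∈ insert ⊥ Q.parts) :
    #(reinsert Q ha has hc).parts = #(Q.parts.erase c) + 1 := by
  rw [reinsert, card_extend, avoid_parts_of_mem_insert_bot hc]

lemma avoid_reinsert (hc : c ∈ insert ⊥ Q.parts) : (reinsert Q ha has hc).avoid a = Q := by
  have hQa : ∀ d ∈ Q.parts, Disjoint d a :=
    fun d hd ↦ disjoint_of_mem_insert_bot (mem_insert_of_mem hd)
  have hca := disjoint_of_mem_insert_bot hc
  ext d
  rw [mem_avoid, reinsert_parts]
  constructor
  · rintro ⟨d, hd, hda, rfl⟩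
    rcases mem_insert.1 hd with rfl | hd
    · rw [sup_sdiff_left_self, hca.sdiff_eq_left]
      refine (mem_insert.1 hc).resolve_left ?_
      rintro rfl
      exact hda (by simp)
    · obtain ⟨-, hd⟩ := mem_erase.1 hd
      rwa [(hQa d hd).sdiff_eq_left]
  · intro hd
    by_cases hdc : d = c
    · subst hdc
      exact ⟨a ⊔ d, mem_insert_self _ _,
        fun h ↦ Q.ne_bot hd ((hQa d hd).eq_bot_of_le (le_sup_right.trans h)),
        by rw [sup_sdiff_left_self, hca.sdiff_eq_left]⟩
    · exact ⟨d, mem_insert_of_mem (mem_erase.2 ⟨hdc, hd⟩),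
        fun h ↦ Q.ne_bot hd ((hQa d hd).eq_bot_of_le h), (hQa d hd).sdiff_eq_left⟩

lemma reinsert_injective {Q' : Finpartition (s \ a)} {c' : α} (hc : c ∈ insert ⊥ Q.parts)
    (hc' : c' ∈ insert ⊥ Q'.parts) (h : reinsert Q ha has hc = reinsert Q' ha has hc') :
    Q = Q' ∧ c = c' := by
  refine ⟨by rw [← avoid_reinsert ha has hc, h, avoid_reinsert], ?_⟩
  have hmem : a ⊔ c ∈ (reinsert Q' ha has hc').parts := by
    rw [← h, reinsert_parts]; exact mem_insert_self _ _
  have hmem' : a ⊔ c' ∈ (reinsert Q' ha has hc').parts := by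
    rw [reinsert_parts]; exact mem_insert_self _ _
  have hpart : a ⊔ c = a ⊔ c' := by
    by_contra hne
    exact ha (le_bot_iff.1 ((reinsert Q' ha has hc').disjoint hmem hmem' hne
      le_sup_left le_sup_left))
  rw [← (disjoint_of_mem_insert_bot hc).sdiff_eq_left,
    ← (disjoint_of_mem_insert_bot hc').sdiff_eq_left, ← sup_sdiff_left_self, hpart,
    sup_sdiff_left_self]

lemma reinsert_avoid {z : Finpartition s} {B : α} (hB : B ∈ z.parts) (haB : a ≤ B) :
    reinsert (z.avoid a) ha has (sdiff_mem_insert_bot_avoid hB) = z := by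
  ext : 1
  rw [reinsert, extend_parts, avoid_avoid_parts, sup_sdiff_cancel_right haB,
    avoid_parts_of_mem_insert_bot (mem_insert_of_mem hB), insert_erase hB]

lemma le_reinsert {x : Finpartition s} (hax : a ∈ x.parts) (hx : x.avoid a ≤ Q)
    (hc : c ∈ insert ⊥ Q.parts) : x ≤ reinsert Q (x.ne_bot hax) (x.le hax) hc := by
  intro d hd
  rw [reinsert_parts]
  by_cases hda : d = a
  · subst hda
    exact ⟨d ⊔ c, mem_insert_self _ _, le_sup_left⟩
  have hdisj : Disjoint d a := x.disjoint hd hax hda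
  obtain ⟨e, he, hde⟩ := hx ((x.mem_avoid).2
    ⟨d, hd, fun h ↦ x.ne_bot hd (hdisj.eq_bot_of_le h), hdisj.sdiff_eq_left⟩)
  by_cases hec : e = c
  · exact ⟨a ⊔ c, mem_insert_self _ _, hde.trans (hec ▸ le_sup_right)⟩
  · exact ⟨e, mem_insert_of_mem (mem_erase.2 ⟨hec, he⟩), hde⟩

end GeneralizedBooleanAlgebra

end Finpartition

def partitionMobius (k : ℕ) : ℤ := (-1) ^ (k - 1) * (k - 1).factorial

lemma partitionMobius_add_two_add (k : ℕ) :
    partitionMobius (k + 2) + (k + 1) * partitionMobius (k + 1) = 0 := by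
  show (-1) ^ (k + 1) * ((k + 1).factorial : ℤ) + (k + 1) * ((-1) ^ k * k.factorial) = 0
  push_cast [Nat.factorial_succ]
  ring

namespace Finpartition

variable {α : Type*} [DecidableEq α] {s t : Finset α}

lemma sum_insert_bot_partitionMobius_eq_zero (Q : Finpartition t) (ht : t ≠ ∅) :
    ∑ c ∈ insert ⊥ Q.parts, partitionMobius (#(Q.parts.erase c) + 1) = 0 := by
  obtain ⟨k, hk⟩ : ∃ k, #Q.parts = k + 1 :=
    Nat.exists_eq_add_one.2 (card_pos.2 (Q.parts_nonempty ht))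
  rw [sum_insert Q.bot_notMem, erase_eq_of_notMem Q.bot_notMem,
    sum_congr rfl fun c hc ↦ by rw [card_erase_of_mem hc], sum_const, nsmul_eq_mul, hk]
  simpa using partitionMobius_add_two_add k

open Classical in
theorem sum_filter_le_partitionMobius_eq_zero (x : Finpartition s) (hx : 1 < #x.parts) :
    ∑ z ∈ univ.filter (x ≤ ·), partitionMobius #z.parts = 0 := by
  obtain ⟨a, ha, c, hc, hac⟩ := one_lt_card.1 hx
  have hsa : s \ a ≠ ∅ :=
    ne_bot_of_le_ne_bot (x.ne_bot hc) (le_sdiff.2 ⟨x.le hc, x.disjoint hc ha (Ne.symm hac)⟩)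
  set F := (univ.filter (x.avoid a ≤ ·)).sigma fun Q ↦ insert ⊥ Q.parts
  have hF : ∀ Qc ∈ F, Qc.2 ∈ insert ⊥ Qc.1.parts := fun Qc h ↦ (mem_sigma.1 h).2
  calc ∑ z ∈ univ.filter (x ≤ ·), partitionMobius #z.parts
      = ∑ Qc ∈ F, partitionMobius (#(Qc.1.parts.erase Qc.2) + 1) := by
        refine (sum_bij (fun Qc h ↦ reinsert Qc.1 (x.ne_bot ha) (x.le ha) (hF Qc h))
          ?_ ?_ ?_ ?_).symm
        · intro Qc h
          exact mem_filter.2 ⟨mem_univ _, le_reinsert ha (mem_filter.1 (mem_sigma.1 h).1).2 _⟩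
        · rintro ⟨Q, c⟩ h ⟨Q', c'⟩ h' heq
          obtain ⟨rfl, rfl⟩ := reinsert_injective _ _ _ _ heq
          rfl
        · intro z hz
          obtain ⟨B, hB, haB⟩ := (mem_filter.1 hz).2 ha
          exact ⟨⟨z.avoid a, B \ a⟩, mem_sigma.2 ⟨mem_filter.2 ⟨mem_univ _,
            avoid_mono (mem_filter.1 hz).2 a⟩, sdiff_mem_insert_bot_avoid hB⟩,
            reinsert_avoid _ _ hB haB⟩
        · intro Qc h
          rw [card_reinsert_parts]
    _ = ∑ Q ∈ univ.filter (x.avoid a ≤ ·),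
          ∑ c ∈ insert ⊥ Q.parts, partitionMobius (#(Q.parts.erase c) + 1) := sum_sigma _ _ _
    _ = 0 := sum_eq_zero fun Q _ ↦ Q.sum_insert_bot_partitionMobius_eq_zero hsa

lemma one_lt_card_parts_of_ne {β : Type*} [Lattice β] [OrderBot β] {u : β}
    {P Q : Finpartition u} (hQ : Q.parts = {u}) (hPQ : P ≠ Q) : 1 < #P.parts := by
  by_contra! hP
  have hu : u ≠ ⊥ := Q.ne_bot (hQ ▸ mem_singleton_self u)
  obtain ⟨p, hp⟩ := card_eq_one.1 (le_antisymm hP (card_pos.2 (P.parts_nonempty hu)))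
  have hpu : p = u := by simpa [hp] using P.sup_parts
  exact hPQ (Finpartition.ext (by rw [hp, hQ, hpu]))

end Finpartition

open Finset Classical in
/-- The Mathlib order on `Finpartition` (`P ≤ Q` iff `P` refines `Q`) is the dual of the
paper's order, so the interval `0̂ ≤ z < y` of the paper is `{z | y < z}` in Mathlib's order,
and `μ = μ(0̂, ·)` is characterised by `μ 0̂ = 1` and `μ y = -∑_{0̂ ≤ z < y} μ z` for `y ≠ 0̂`. -/
theorem stmt0_general (n : ℕ) (b : Finpartition (Finset.univ : Finset (Fin n)))
    (hb : b.parts = {Finset.univ})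
    (μ : Finpartition (Finset.univ : Finset (Fin n)) → ℤ)
    (hμb : μ b = 1)
    (hμ : ∀ y, y ≠ b →
      μ y = -∑ z ∈ Finset.univ.filter (fun z => y < z), μ z)
    (x : Finpartition (Finset.univ : Finset (Fin n))) (r : ℕ)
    (hx : x.parts.card = r + 1) :
    μ x = (-1) ^ r * (r.factorial : ℤ) := by
  suffices h : ∀ y, μ y = partitionMobius #y.parts by
    rw [h, hx]
    rfl
  intro y
  induction y using WellFoundedGT.induction with
  | _ y ih =>
  by_cases hyb : y = b
  · rw [hyb, hμb, hb, card_singleton]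
    rfl
  have hsum :=
    y.sum_filter_le_partitionMobius_eq_zero (Finpartition.one_lt_card_parts_of_ne hb hyb)
  have hsplit : univ.filter (y ≤ ·) = insert y (univ.filter (y < ·)) := by
    ext z
    simp [le_iff_eq_or_lt, eq_comm]
  rw [hsplit, sum_insert (by simp)] at hsum
  rw [hμ y hyb, sum_congr rfl fun z hz ↦ ih z (mem_filter.1 hz).2]
  linarith

open Finset Classical in
/-- In the lattice of partitions of an `n`-element set, ordered so that `x ≤ y` iff `y`
refines `x` (so the one-block partition `b` is the bottom element `0̂`), the Möbius
function satisfies `μ(0̂, x) = (-1)^r · r!` where `x` has `r + 1` blocks.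
Here the Mathlib order on `Finpartition` (`P ≤ Q` iff `P` refines `Q`) is the dual of the
paper's order, so the interval `0̂ ≤ z < y` of the paper is `{z | y < z}` in Mathlib's order,
and `μ = μ(0̂, ·)` is characterised by `μ 0̂ = 1` and `μ y = -∑_{0̂ ≤ z < y} μ z` for `y ≠ 0̂`. -/
theorem stmt0 (n : ℕ) (b : Finpartition (Finset.univ : Finset (Fin n)))
    (hb : b.parts = {Finset.univ})
    (hbot : ∀ x : Finpartition (Finset.univ : Finset (Fin n)), x ≤ b)
    (μ : Finpartition (Finset.univ : Finset (Fin n)) → ℤ)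
    (hμb : μ b = 1)
    (hμ : ∀ y, y ≠ b →
      μ y = -∑ z ∈ Finset.univ.filter (fun z => y < z), μ z)
    (x : Finpartition (Finset.univ : Finset (Fin n))) (r : ℕ)
    (hx : x.parts.card = r + 1) :
    μ x = (-1) ^ r * (r.factorial : ℤ) :=
  stmt0_general n b hb μ hμb hμ x r hx
end

section
/- Let x₁,…,xₙ be the elements of a finite lattice (P, ≤), let f : P → ℂ be a function, and let A be the n×n matrix with entries a_{ij} = f(xᵢ ∧ xⱼ). Then det(A) = ∏_{i=1}^n ∑_{x_k ≤ x_i} f(x_k) μ(x_k, x_i), where μ is the Möbius function of P. -/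
/-!
Write `g y = ∑_{z ≤ y} f z μ(z, y)`. Möbius inversion gives `f w = ∑_{y ≤ w} g y`, so
`f (xᵢ ⊓ xⱼ) = ∑_k ζ(xₖ, xᵢ) g(xₖ) ζ(xₖ, xⱼ)`, i.e. the meet matrix factors as `Z D Zᵀ` with
`Z` the zeta matrix of the enumeration and `D = diag (g ∘ x)`. Ordering the indices along a
linear extension of `P` makes `Z` unitriangular, so `det A = det D = ∏ᵢ g(xᵢ)`.
-/

open Finset

section Moebius

variable {P R : Type*} [PartialOrder P] [Fintype P] [DecidableLE P] [DecidableLT P] [Ring R]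
  {μ : P → P → R}

theorem sum_filter_Icc_moebius_eq_ite [DecidableEq P] (hrefl : ∀ a, μ a a = 1)
    (hlt : ∀ a b, a < b → μ a b = -∑ z ∈ univ.filter (fun z => a ≤ z ∧ z < b), μ a z)
    {a b : P} (hab : a ≤ b) :
    ∑ y ∈ univ.filter (fun y => a ≤ y ∧ y ≤ b), μ a y = if a = b then 1 else 0 := by
  rcases hab.eq_or_lt with rfl | hab
  · have hIcc : univ.filter (fun y => a ≤ y ∧ y ≤ a) = {a} := by
      ext y
      simp [le_antisymm_iff, and_comm]
    simp [hIcc, hrefl]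
  · have hIcc : univ.filter (fun y => a ≤ y ∧ y ≤ b)
        = insert b (univ.filter (fun y => a ≤ y ∧ y < b)) := by
      ext y
      simp only [mem_insert, mem_filter, mem_univ, true_and, le_iff_lt_or_eq (b := b)]
      constructor
      · rintro ⟨hay, hyb | rfl⟩
        exacts [Or.inr ⟨hay, hyb⟩, Or.inl rfl]
      · rintro (rfl | ⟨hay, hyb⟩)
        exacts [⟨hab.le, Or.inr rfl⟩, ⟨hay, Or.inl hyb⟩]
    rw [hIcc, sum_insert (by simp), hlt a b hab, if_neg hab.ne]
    abel

theorem sum_filter_le_sum_filter_le_mul_moebius (hrefl : ∀ a, μ a a = 1)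
    (hlt : ∀ a b, a < b → μ a b = -∑ z ∈ univ.filter (fun z => a ≤ z ∧ z < b), μ a z)
    (f : P → R) (w : P) :
    ∑ y ∈ univ.filter (· ≤ w), ∑ z ∈ univ.filter (· ≤ y), f z * μ z y = f w := by
  classical
  rw [sum_comm' (t' := univ.filter (· ≤ w))
    (s' := fun z => univ.filter (fun y => z ≤ y ∧ y ≤ w))
    (fun y z => by simp only [mem_filter, mem_univ, true_and]; grind)]
  calc ∑ z ∈ univ.filter (· ≤ w), ∑ y ∈ univ.filter (fun y => z ≤ y ∧ y ≤ w), f z * μ z y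
      = ∑ z ∈ univ.filter (· ≤ w), if z = w then f z else 0 := by
        refine sum_congr rfl fun z hz => ?_
        rw [← mul_sum, sum_filter_Icc_moebius_eq_ite hrefl hlt (mem_filter.1 hz).2]
        simp
    _ = f w := by simp

end Moebius

section ZetaMatrix

variable {ι : Type*} [Fintype ι] [DecidableEq ι] (R : Type*) [CommRing R]

def zetaMatrix {P : Type*} [PartialOrder P] [DecidableLE P] (x : ι → P) : Matrix ι ι R :=
  Matrix.of fun i j => if x j ≤ x i then 1 else 0

theorem det_zetaMatrix {P : Type*} [PartialOrder P] [DecidableLE P] {x : ι → P}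
    (hx : Function.Injective x) : (zetaMatrix R x).det = 1 := by
  let _ : LinearOrder ι := LinearOrder.lift' (toLinearExtension ∘ x) hx
  rw [Matrix.det_of_isLowerTriangular]
  · simp [zetaMatrix]
  · intro i j hij
    have hji : ¬ x j ≤ x i := fun h => (toLinearExtension.monotone h : j ≤ i).not_gt hij
    simp [zetaMatrix, hji]

variable {R}

theorem of_sum_filter_le_inf_eq_zetaMatrix_mul_diagonal {P : Type*} [Lattice P] [DecidableLE P]
    [Fintype P] {x : ι → P} (hx : Function.Bijective x) (g : P → R) :
    Matrix.of (fun i j => ∑ y ∈ univ.filter (· ≤ x i ⊓ x j), g y)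
      = zetaMatrix R x * Matrix.diagonal (g ∘ x) * (zetaMatrix R x).transpose := by
  ext i j
  rw [Matrix.mul_apply]
  simp only [Matrix.of_apply, Matrix.mul_diagonal, Matrix.transpose_apply, zetaMatrix,
    Function.comp_apply]
  rw [sum_filter, ← Fintype.sum_bijective x hx
    (fun k => if x k ≤ x i ⊓ x j then g (x k) else 0) _ (fun _ => rfl)]
  refine sum_congr rfl fun k _ => ?_
  by_cases hi : x k ≤ x i <;> by_cases hj : x k ≤ x j <;> simp [hi, hj]

end ZetaMatrix

open Finset Classical in
theorem stmt2_general {P : Type} [Lattice P] [Fintype P]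
    (n : ℕ) (x : Fin n → P) (hx : Function.Bijective x)
    (f : P → ℂ) (μ : P → P → ℂ)
    (hrefl : ∀ a, μ a a = 1)
    (hlt : ∀ a b, a < b →
      μ a b = -∑ z ∈ Finset.univ.filter (fun z => a ≤ z ∧ z < b), μ a z) :
    (Matrix.of fun i j : Fin n => f (x i ⊓ x j)).det
      = ∏ i : Fin n, ∑ z ∈ Finset.univ.filter (fun z => z ≤ x i), f z * μ z (x i) := by
  set g : P → ℂ := fun y => ∑ z ∈ univ.filter (· ≤ y), f z * μ z y
  have hA : Matrix.of (fun i j : Fin n => f (x i ⊓ x j))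
      = Matrix.of (fun i j => ∑ y ∈ univ.filter (· ≤ x i ⊓ x j), g y) := by
    simp only [g, sum_filter_le_sum_filter_le_mul_moebius hrefl hlt]
  rw [hA, of_sum_filter_le_inf_eq_zetaMatrix_mul_diagonal hx, Matrix.det_mul, Matrix.det_mul,
    Matrix.det_transpose, det_zetaMatrix ℂ hx.injective, Matrix.det_diagonal, one_mul, mul_one]
  rfl

open Finset Classical in
/-- Let `x₁, …, xₙ` enumerate a finite lattice `P`, let `f : P → ℂ`, and let `A` be the
matrix with `A i j = f (xᵢ ⊓ xⱼ)`.  Then `det A = ∏ᵢ ∑_{z ≤ xᵢ} f z · μ(z, xᵢ)`, where `μ`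
is the Möbius function of `P`, characterised by `μ a a = 1`,
`μ a b = -∑_{a ≤ z < b} μ a z` for `a < b`, and `μ a b = 0` when `¬ a ≤ b`. -/
theorem stmt2 {P : Type} [Lattice P] [Fintype P]
    (n : ℕ) (x : Fin n → P) (hx : Function.Bijective x)
    (f : P → ℂ) (μ : P → P → ℂ)
    (hrefl : ∀ a, μ a a = 1)
    (hlt : ∀ a b, a < b →
      μ a b = -∑ z ∈ Finset.univ.filter (fun z => a ≤ z ∧ z < b), μ a z)
    (hnle : ∀ a b, ¬ a ≤ b → μ a b = 0) :
    (Matrix.of fun i j : Fin n => f (x i ⊓ x j)).det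
      = ∏ i : Fin n, ∑ z ∈ Finset.univ.filter (fun z => z ≤ x i), f z * μ z (x i) :=
  stmt2_general n x hx f μ hrefl hlt
end

section
/- Let G = (V,E) be a graph and k a positive integer, and let α be the number of colourful independent sets of size k in the graph G' obtained as follows: G' has vertex set V × [k], with (u,i) adjacent to (v,j) whenever either (u = v and i ≠ j) or (u ≠ v and uv ∉ E(G)), and (v,i) is coloured i. Then α = k! · (number of k-cliques in G). -/
/-- The blow-up graph `G'` of `G`: vertices `V × [k]`, with `(u,i)` adjacent to `(v,j)` iff
(`u = v` and `i ≠ j`) or (`u ≠ v` and `uv ∉ E(G)`); the vertex `(v,i)` is coloured `i`. -/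
def blowup {V : Type} (G : SimpleGraph V) (k : ℕ) : SimpleGraph (V × Fin k) :=
  SimpleGraph.fromRel fun a b =>
    (a.1 = b.1 ∧ a.2 ≠ b.2) ∨ (a.1 ≠ b.1 ∧ ¬ G.Adj a.1 b.1)

private lemma blowup_not_adj_iff {V : Type} (G : SimpleGraph V) {k : ℕ}
    {a b : V × Fin k} (h : a.2 ≠ b.2) :
    ¬ (blowup G k).Adj a b ↔ G.Adj a.1 b.1 := by
  have hab : a ≠ b := fun e => h (by rw [e])
  rw [blowup, SimpleGraph.fromRel_adj]
  constructor
  · intro hn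
    by_contra hA
    apply hn
    refine ⟨hab, ?_⟩
    by_cases he : a.1 = b.1
    · exact Or.inl (Or.inl ⟨he, h⟩)
    · exact Or.inl (Or.inr ⟨he, hA⟩)
  · rintro hA ⟨-, (⟨he, -⟩ | ⟨-, hn⟩) | (⟨he, -⟩ | ⟨-, hn⟩)⟩
    · exact (G.ne_of_adj hA) he
    · exact hn hA
    · exact (G.ne_of_adj hA) he.symm
    · exact hn hA.symm

/-- The number `α` of colourful independent sets of size `k` in the blow-up `G'` equals
`k!` times the number of `k`-cliques in `G`. -/
theorem stmt11 {V : Type} [Fintype V] [DecidableEq V] (G : SimpleGraph V) (k : ℕ) :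
    Nat.card {S : Finset (V × Fin k) // S.card = k ∧
        (∀ a ∈ S, ∀ b ∈ S, a ≠ b → ¬ (blowup G k).Adj a b) ∧
        (∀ i : Fin k, ∃! x, x ∈ S ∧ x.2 = i)}
      = k.factorial *
        Nat.card {T : Finset V // T.card = k ∧ ∀ a ∈ T, ∀ b ∈ T, a ≠ b → G.Adj a b} := by
  classical
  -- B: tuples of pairwise adjacent vertices
  let B := {f : Fin k → V // ∀ i j : Fin k, i ≠ j → G.Adj (f i) (f j)}
  let A := {S : Finset (V × Fin k) // S.card = k ∧
        (∀ a ∈ S, ∀ b ∈ S, a ≠ b → ¬ (blowup G k).Adj a b) ∧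
        (∀ i : Fin k, ∃! x, x ∈ S ∧ x.2 = i)}
  let C := {T : Finset V // T.card = k ∧ ∀ a ∈ T, ∀ b ∈ T, a ≠ b → G.Adj a b}
  -- the map B → A
  have toA_props : ∀ f : B,
      (Finset.image (fun i => (f.1 i, i)) Finset.univ).card = k ∧
      (∀ a ∈ Finset.image (fun i => (f.1 i, i)) Finset.univ,
         ∀ b ∈ Finset.image (fun i => (f.1 i, i)) Finset.univ,
         a ≠ b → ¬ (blowup G k).Adj a b) ∧
      (∀ i : Fin k, ∃! x, x ∈ Finset.image (fun i => (f.1 i, i)) Finset.univ ∧ x.2 = i) := by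
    intro f
    refine ⟨?_, ?_, ?_⟩
    · rw [Finset.card_image_of_injective _ (fun i j h => congrArg Prod.snd h)]
      simp
    · intro a ha b hb hab
      simp only [Finset.mem_image, Finset.mem_univ, true_and] at ha hb
      obtain ⟨i, rfl⟩ := ha
      obtain ⟨j, rfl⟩ := hb
      have hij : i ≠ j := fun h => hab (by rw [h])
      exact (blowup_not_adj_iff G hij).mpr (f.2 i j hij)
    · intro i
      refine ⟨(f.1 i, i), ⟨Finset.mem_image_of_mem _ (Finset.mem_univ i), rfl⟩, ?_⟩
      rintro y ⟨hy, hy2⟩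
      simp only [Finset.mem_image, Finset.mem_univ, true_and] at hy
      obtain ⟨j, rfl⟩ := hy
      simp only at hy2
      subst hy2
      rfl
  let toA : B → A := fun f => ⟨Finset.image (fun i => (f.1 i, i)) Finset.univ, toA_props f⟩
  have hbij : Function.Bijective toA := by
    constructor
    · intro f g h
      have h' : Finset.image (fun i => (f.1 i, i)) Finset.univ
          = Finset.image (fun i => (g.1 i, i)) Finset.univ := congrArg Subtype.val h
      ext i
      have : (f.1 i, i) ∈ Finset.image (fun i => (g.1 i, i)) Finset.univ := by
        rw [← h']; exact Finset.mem_image_of_mem _ (Finset.mem_univ i)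
      simp only [Finset.mem_image, Finset.mem_univ, true_and] at this
      obtain ⟨j, hj⟩ := this
      have hji : j = i := congrArg Prod.snd hj
      subst hji
      exact (congrArg Prod.fst hj).symm
    · rintro ⟨S, hcard, hindep, huniq⟩
      let x : Fin k → V × Fin k := fun i => Classical.choose (huniq i).exists
      have hx : ∀ i, x i ∈ S ∧ (x i).2 = i := fun i => Classical.choose_spec (huniq i).exists
      have hadj : ∀ i j : Fin k, i ≠ j → G.Adj ((x i).1) ((x j).1) := by
        intro i j hij
        have hsnd : (x i).2 ≠ (x j).2 := by rw [(hx i).2, (hx j).2]; exact hij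
        have hne : x i ≠ x j := fun h => hsnd (by rw [h])
        exact (blowup_not_adj_iff G hsnd).mp (hindep _ (hx i).1 _ (hx j).1 hne)
      refine ⟨⟨fun i => (x i).1, hadj⟩, ?_⟩
      apply Subtype.ext
      show Finset.image (fun i => ((x i).1, i)) Finset.univ = S
      have hxeq : ∀ i, ((x i).1, i) = x i := by
        intro i
        exact Prod.ext rfl (hx i).2.symm
      apply Finset.Subset.antisymm
      · intro a ha
        simp only [Finset.mem_image, Finset.mem_univ, true_and] at ha
        obtain ⟨i, rfl⟩ := ha
        rw [hxeq i]
        exact (hx i).1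
      · intro s hs
        have : s = x s.2 := (huniq s.2).unique ⟨hs, rfl⟩ ⟨(hx s.2).1, (hx s.2).2⟩
        simp only [Finset.mem_image, Finset.mem_univ, true_and]
        exact ⟨s.2, by rw [← hxeq s.2] at this; exact this.symm⟩
  -- the map B → C
  have phi_props : ∀ f : B, (Finset.image f.1 Finset.univ).card = k ∧
      ∀ a ∈ Finset.image f.1 Finset.univ, ∀ b ∈ Finset.image f.1 Finset.univ,
        a ≠ b → G.Adj a b := by
    intro f
    have hinj : Function.Injective f.1 := by
      intro i j h
      by_contra hij
      exact G.irrefl (h ▸ f.2 i j hij)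
    constructor
    · rw [Finset.card_image_of_injective _ hinj]; simp
    · intro a ha b hb hab
      simp only [Finset.mem_image, Finset.mem_univ, true_and] at ha hb
      obtain ⟨i, rfl⟩ := ha
      obtain ⟨j, rfl⟩ := hb
      exact f.2 i j (fun h => hab (by rw [h]))
  let phi : B → C := fun f => ⟨Finset.image f.1 Finset.univ, phi_props f⟩
  -- fiber of phi at T ≃ functions with image T
  have fiberEquiv1 : ∀ T : C, {b : B // phi b = T} ≃
      {f : Fin k → V // Finset.image f Finset.univ = T.1} := by
    intro T
    refine ⟨fun b => ⟨b.1.1, congrArg Subtype.val b.2⟩, fun g => ⟨⟨g.1, ?_⟩, Subtype.ext g.2⟩,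
      fun b => rfl, fun g => rfl⟩
    intro i j hij
    have hcard : (Finset.image g.1 Finset.univ).card = (Finset.univ : Finset (Fin k)).card := by
      rw [g.2, T.2.1]; simp
    have hinj : Set.InjOn g.1 ↑(Finset.univ : Finset (Fin k)) := Finset.card_image_iff.mp hcard
    have hne : g.1 i ≠ g.1 j := fun h =>
      hij (hinj (by simp) (by simp) h)
    have hmem : ∀ i, g.1 i ∈ T.1 := fun i => by
      have := Finset.mem_image_of_mem g.1 (Finset.mem_univ i)
      rwa [g.2] at this
    exact T.2.2 _ (hmem i) _ (hmem j) hne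
  -- functions with image T ≃ equivs Fin k ≃ T
  have fiberEquiv2 : ∀ T : C, {f : Fin k → V // Finset.image f Finset.univ = T.1} ≃
      (Fin k ≃ ↥T.1) := by
    intro T
    have hcardT : Fintype.card ↥T.1 = k := by rw [Fintype.card_coe, T.2.1]
    have hmem : ∀ (g : {f : Fin k → V // Finset.image f Finset.univ = T.1}) (i : Fin k),
        g.1 i ∈ T.1 := fun g i => by
      have := Finset.mem_image_of_mem g.1 (Finset.mem_univ i)
      rwa [g.2] at this
    refine ⟨fun g => Equiv.ofBijective
        (fun i => (⟨g.1 i, hmem g i⟩ : ↥T.1)) ?_,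
      fun e => ⟨fun i => (e i : V), ?_⟩, fun g => rfl, fun e => Equiv.ext fun i => Subtype.ext rfl⟩
    · have hcard : (Finset.image g.1 Finset.univ).card = (Finset.univ : Finset (Fin k)).card := by
        rw [g.2, T.2.1]; simp
      have hinj : Set.InjOn g.1 ↑(Finset.univ : Finset (Fin k)) := Finset.card_image_iff.mp hcard
      have hinj' : Function.Injective
          (fun i => (⟨g.1 i, hmem g i⟩ : ↥T.1)) := by
        intro i j h
        exact hinj (by simp) (by simp) (congrArg Subtype.val h)
      rw [Fintype.bijective_iff_injective_and_card]
      exact ⟨hinj', by simp [hcardT]⟩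
    · ext v
      simp only [Finset.mem_image, Finset.mem_univ, true_and]
      constructor
      · rintro ⟨i, rfl⟩
        exact (e i).2
      · intro hv
        exact ⟨e.symm ⟨v, hv⟩, by rw [Equiv.apply_symm_apply]⟩
  -- equivs Fin k ≃ T  ≃  Perm (Fin k)
  have fiberEquiv3 : ∀ T : C, (Fin k ≃ ↥T.1) ≃ Equiv.Perm (Fin k) := by
    intro T
    have hcardT : Fintype.card ↥T.1 = k := by rw [Fintype.card_coe, T.2.1]
    exact Equiv.equivCongr (Equiv.refl _) (Fintype.equivFinOfCardEq hcardT)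
  -- assemble
  have e1 : A ≃ B := (Equiv.ofBijective toA hbij).symm
  have e2 : B ≃ Σ T : C, {b : B // phi b = T} := (Equiv.sigmaFiberEquiv phi).symm
  have e3 : (Σ T : C, {b : B // phi b = T}) ≃ Σ _ : C, Equiv.Perm (Fin k) :=
    Equiv.sigmaCongrRight fun T => ((fiberEquiv1 T).trans (fiberEquiv2 T)).trans (fiberEquiv3 T)
  have e4 : (Σ _ : C, Equiv.Perm (Fin k)) ≃ C × Equiv.Perm (Fin k) := Equiv.sigmaEquivProd _ _
  calc Nat.card A = Nat.card (C × Equiv.Perm (Fin k)) :=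
        Nat.card_congr (((e1.trans e2).trans e3).trans e4)
    _ = Nat.card C * Nat.card (Equiv.Perm (Fin k)) := Nat.card_prod _ _
    _ = k.factorial * Nat.card C := by
        have hp : Nat.card (Equiv.Perm (Fin k)) = k.factorial := by
          simp [Nat.card_eq_fintype_card, Fintype.card_perm]
        rw [hp, Nat.mul_comm]
end

section
/- Let G be a graph with colouring c : V(G) → [k] and let U, U' be colourful k-subsets of V(G). If the set of colour-classes of connected components of G[U] (as a partition P(U) of [k]) equals P(U'), and W is obtained from U by adding the auxiliary vertices x₁,…,x_ℓ as in the partition-gadget construction for a partition P_i of [k], then G_i[W] is connected if and only if G_i[W'] is connected, where W' = U' ∪ {x₁,…,x_ℓ}. -/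
/-- The gadget graph `G_i`: to the `k`-coloured graph `G` we add one new vertex `x_j`
(modelled as `Sum.inr j`) for each block `X j` of the partition `P_i = {X₁,…,X_ℓ}` of `[k]`,
joined to exactly those vertices of `G` whose colour lies in `X j`. -/
def gadget {V : Type} (G : SimpleGraph V) {k ℓ : ℕ} (c : V → Fin k)
    (X : Fin ℓ → Finset (Fin k)) : SimpleGraph (V ⊕ Fin ℓ) :=
  SimpleGraph.fromRel fun a b =>
    match a, b with
    | Sum.inl u, Sum.inl w => G.Adj u w
    | Sum.inl u, Sum.inr j => c u ∈ X j
    | _, _ => False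

open SimpleGraph in
private lemma gadget_key {V : Type} (G : SimpleGraph V) {k ℓ : ℕ} (c : V → Fin k)
    (X : Fin ℓ → Finset (Fin k)) (U U' : Set V)
    (hU : Set.BijOn c U Set.univ) (hU' : Set.BijOn c U' Set.univ)
    (hsame : ∀ a b : Fin k,
      (∃ u v : U, c u.1 = a ∧ c v.1 = b ∧ (G.induce U).Reachable u v) →
      (∃ u v : U', c u.1 = a ∧ c v.1 = b ∧ (G.induce U').Reachable u v)) :
    ((gadget G c X).induce (Sum.inl '' U ∪ Set.range Sum.inr)).Connected →
      ((gadget G c X).induce (Sum.inl '' U' ∪ Set.range Sum.inr)).Connected := by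
  classical
  intro hcon
  set W : Set (V ⊕ Fin ℓ) := Sum.inl '' U ∪ Set.range Sum.inr with hWdef
  set W' : Set (V ⊕ Fin ℓ) := Sum.inl '' U' ∪ Set.range Sum.inr with hW'def
  have hsurj' : ∀ a : Fin k, ∃ u', u' ∈ U' ∧ c u' = a := fun a => hU'.2.2 (Set.mem_univ a)
  choose g' hg'mem hg'c using hsurj'
  have hsurj : ∀ a : Fin k, ∃ u, u ∈ U ∧ c u = a := fun a => hU.2.2 (Set.mem_univ a)
  choose g hgmem hgc using hsurj
  have memU : ∀ {u : V}, Sum.inl u ∈ W → u ∈ U := by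
    rintro u (⟨w, hw, heq⟩ | ⟨j, hj⟩)
    · exact Sum.inl.inj heq ▸ hw
    · exact absurd hj (by simp)
  have memU' : ∀ {u : V}, Sum.inl u ∈ W' → u ∈ U' := by
    rintro u (⟨w, hw, heq⟩ | ⟨j, hj⟩)
    · exact Sum.inl.inj heq ▸ hw
    · exact absurd hj (by simp)
  -- the transfer map
  let F' : ↥W → ↥W' := fun a => match a with
    | ⟨Sum.inl u, _⟩ => ⟨Sum.inl (g' (c u)), Or.inl ⟨_, hg'mem _, rfl⟩⟩
    | ⟨Sum.inr j, _⟩ => ⟨Sum.inr j, Or.inr ⟨j, rfl⟩⟩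
  -- lifting reachability in G.induce U' to the gadget
  let ι : G.induce U' →g (gadget G c X).induce W' :=
    { toFun := fun v => ⟨Sum.inl v.1, Or.inl ⟨v.1, v.2, rfl⟩⟩,
      map_rel' := by
        intro a b hab
        simp only [comap_adj, Function.Embedding.coe_subtype] at hab ⊢
        exact ⟨by simp [hab.ne], Or.inl hab⟩ }
  have lift : ∀ (a b : V) (ha : a ∈ U') (hb : b ∈ U')
      (ha' : Sum.inl a ∈ W') (hb' : Sum.inl b ∈ W'),
      (G.induce U').Reachable ⟨a, ha⟩ ⟨b, hb⟩ →
      ((gadget G c X).induce W').Reachable ⟨Sum.inl a, ha'⟩ ⟨Sum.inl b, hb'⟩ := by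
    intro a b ha hb ha' hb' h
    exact h.map ι
  have step : ∀ a b : ↥W, ((gadget G c X).induce W).Adj a b →
      ((gadget G c X).induce W').Reachable (F' a) (F' b) := by
    rintro ⟨av, ha⟩ ⟨bv, hb⟩ hab
    have hab' : (gadget G c X).Adj av bv := hab
    rw [gadget, SimpleGraph.fromRel_adj] at hab'
    match av, bv with
    | Sum.inl u, Sum.inl v =>
      have hGuv : G.Adj u v := hab'.2.elim id (·.symm)
      have hu : u ∈ U := memU ha
      have hv : v ∈ U := memU hb
      have hreach : (G.induce U).Reachable ⟨u, hu⟩ ⟨v, hv⟩ :=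
        SimpleGraph.Adj.reachable (by simpa using hGuv)
      obtain ⟨⟨pv, pmem⟩, ⟨qv, qmem⟩, hp, hq, hr⟩ :=
        hsame (c u) (c v) ⟨⟨u, hu⟩, ⟨v, hv⟩, rfl, rfl, hreach⟩
      have e1 : g' (c u) = pv := hU'.2.1 (hg'mem _) pmem (by rw [hg'c]; exact hp.symm)
      have e2 : g' (c v) = qv := hU'.2.1 (hg'mem _) qmem (by rw [hg'c]; exact hq.symm)
      subst e1
      subst e2
      exact lift _ _ pmem qmem _ _ hr
    | Sum.inl u, Sum.inr j =>
      have hcj : c u ∈ X j := hab'.2.elim id False.elim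
      refine SimpleGraph.Adj.reachable ?_
      show (gadget G c X).Adj (Sum.inl (g' (c u))) (Sum.inr j)
      rw [gadget, SimpleGraph.fromRel_adj]
      refine ⟨by simp, Or.inl ?_⟩
      show c (g' (c u)) ∈ X j
      rw [hg'c]; exact hcj
    | Sum.inr j, Sum.inl u =>
      have hcj : c u ∈ X j := hab'.2.elim False.elim id
      refine SimpleGraph.Reachable.symm (SimpleGraph.Adj.reachable ?_)
      show (gadget G c X).Adj (Sum.inl (g' (c u))) (Sum.inr j)
      rw [gadget, SimpleGraph.fromRel_adj]
      refine ⟨by simp, Or.inl ?_⟩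
      show c (g' (c u)) ∈ X j
      rw [hg'c]; exact hcj
    | Sum.inr j, Sum.inr j' =>
      exact absurd hab'.2 (by simp)
  have reach : ∀ a b : ↥W, ((gadget G c X).induce W).Reachable a b →
      ((gadget G c X).induce W').Reachable (F' a) (F' b) := by
    intro a b h
    obtain ⟨w⟩ := h
    induction w with
    | nil => exact SimpleGraph.Reachable.refl _
    | cons h p ih => exact (step _ _ h).trans ih
  have hsurjF : ∀ a' : ↥W', ∃ a : ↥W, F' a = a' := by
    rintro ⟨x, hx⟩
    match x with
    | Sum.inl u' =>
      have hu' : u' ∈ U' := memU' hx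
      refine ⟨⟨Sum.inl (g (c u')), Or.inl ⟨_, hgmem _, rfl⟩⟩, ?_⟩
      refine Subtype.ext ?_
      show Sum.inl (g' (c (g (c u')))) = Sum.inl u'
      rw [hgc]
      exact congrArg _ (hU'.2.1 (hg'mem _) hu' (hg'c _))
    | Sum.inr j => exact ⟨⟨Sum.inr j, Or.inr ⟨j, rfl⟩⟩, Subtype.ext rfl⟩
  haveI : Nonempty ↥W' := ⟨F' hcon.nonempty.some⟩
  refine SimpleGraph.Connected.mk ?_
  intro a' b'
  obtain ⟨a, rfl⟩ := hsurjF a'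
  obtain ⟨b, rfl⟩ := hsurjF b'
  exact reach a b (hcon.preconnected a b)


/-- If `U` and `U'` are colourful `k`-sets of `G` inducing the same partition `P(U) = P(U')`
of the colours `[k]` by connected components, and `W = U ∪ {x₁,…,x_ℓ}`,
`W' = U' ∪ {x₁,…,x_ℓ}` are obtained by adding the gadget vertices for a partition `P_i`
of `[k]` with blocks `X j`, then `G_i[W]` is connected iff `G_i[W']` is connected. -/
theorem stmt15 {V : Type} [Fintype V] (G : SimpleGraph V) {k ℓ : ℕ} (c : V → Fin k)
    (X : Fin ℓ → Finset (Fin k)) (hX : ∀ a : Fin k, ∃! j, a ∈ X j)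
    (U U' : Set V)
    (hU : Set.BijOn c U Set.univ) (hU' : Set.BijOn c U' Set.univ)
    (hsame : ∀ a b : Fin k,
      (∃ u v : U, c u.1 = a ∧ c v.1 = b ∧ (G.induce U).Reachable u v) ↔
      (∃ u v : U', c u.1 = a ∧ c v.1 = b ∧ (G.induce U').Reachable u v)) :
    ((gadget G c X).induce (Sum.inl '' U ∪ Set.range Sum.inr)).Connected ↔
      ((gadget G c X).induce (Sum.inl '' U' ∪ Set.range Sum.inr)).Connected := by
  constructor
  · exact gadget_key G c X U U' hU hU' (fun a b => (hsame a b).mp)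
  · exact gadget_key G c X U' U hU' hU (fun a b => (hsame a b).mpr)
end
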